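/- Let N ≥ 1 and let f : ℤ^N → ℤ be a function. Then f has finite functional degree if and only if there exists a polynomial P ∈ ℚ[t_1, …, t_N] such that f(x) = P(x_1, …, x_N) for every x ∈ ℤ^N (in particular P takes integer values on ℤ^N). That is, the functions ℤ^N → ℤ of finite functional degree are exactly the restrictions to ℤ^N of integer-valued polynomials. -/

import Mathlib

/-- The difference operator `Δ_a` sending `f` to `x ↦ f (x + a) - f x`. -/
def disc {A B : Type*} [AddCommGroup A] [AddCommGroup B] (a : A) (f : A → B) : A → B :=
  fun x => f (x + a) - f x

/-- Iterated difference operator `Δ_{a_1} ⋯ Δ_{a_k} f` along a list `[a_1, …, a_k]`. -/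
def multiDisc {A B : Type*} [AddCommGroup A] [AddCommGroup B] : List A → (A → B) → (A → B)
  | [], f => f
  | a :: l, f => disc a (multiDisc l f)

/-- `FdegLE f d` says that the functional degree of `f` is at most `d`, i.e. all
`(d+1)`-fold iterated differences of `f` vanish. -/
def FdegLE {A B : Type*} [AddCommGroup A] [AddCommGroup B] (f : A → B) (d : ℕ) : Prop :=
  ∀ l : List A, l.length = d + 1 → multiDisc l f = 0

/-! Functions of finite functional degree are closed under pointwise sums and products (Leibniz
rule for `Δ_a`) and contain the constants and the additive maps, so every polynomial function has
finite degree. Conversely, if all `(d+1)`-fold differences of `f` vanish, Newton's formula on the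
lines `t ↦ t • e₀ + (0, y)` gives `f (t, y) = ∑_{k ≤ d} (t choose k) · (Δ_{e₀}^k f) (0, y)`; each
coefficient `y ↦ (Δ_{e₀}^k f) (0, y)` is again of degree at most `d` in one variable fewer, and
`t ↦ (t choose k)` is a polynomial with rational coefficients, so induction on `N` concludes. -/

section Disc

variable {A B : Type*} [AddCommGroup A] [AddCommGroup B]

@[simp]
lemma multiDisc_nil (f : A → B) : multiDisc [] f = f := rfl

@[simp]
lemma multiDisc_cons (a : A) (l : List A) (f : A → B) :
    multiDisc (a :: l) f = disc a (multiDisc l f) := rfl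

lemma multiDisc_append (l₁ l₂ : List A) (f : A → B) :
    multiDisc (l₁ ++ l₂) f = multiDisc l₁ (multiDisc l₂ f) := by
  induction l₁ with
  | nil => rfl
  | cons a l ih => simp [ih]

lemma multiDisc_replicate (k : ℕ) (a : A) (f : A → B) :
    multiDisc (List.replicate k a) f = (disc a)^[k] f := by
  induction k with
  | zero => rfl
  | succ k ih => rw [List.replicate_succ, multiDisc_cons, ih, Function.iterate_succ_apply']

lemma multiDisc_zero (l : List A) : multiDisc l (0 : A → B) = 0 := by
  induction l with
  | nil => rfl
  | cons a l ih => simp only [multiDisc_cons, ih]; funext x; simp [disc]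

lemma multiDisc_add (l : List A) (f g : A → B) :
    multiDisc l (f + g) = multiDisc l f + multiDisc l g := by
  induction l with
  | nil => rfl
  | cons a l ih => simp only [multiDisc_cons, ih]; funext x; simp only [disc, Pi.add_apply]; abel

lemma multiDisc_addMonoidHom_comp {B' : Type*} [AddCommGroup B'] (φ : B →+ B') (l : List A)
    (f : A → B) : multiDisc l (φ ∘ f) = φ ∘ multiDisc l f := by
  induction l with
  | nil => rfl
  | cons a l ih => funext x; simp [ih, disc]

lemma multiDisc_comp_add {C : Type*} [AddCommGroup C] (ι : C →+ A) (c : A) (l : List C)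
    (f : A → B) :
    multiDisc l (fun x => f (ι x + c)) = fun x => multiDisc (l.map ι) f (ι x + c) := by
  induction l with
  | nil => rfl
  | cons a l ih =>
    funext x
    simp only [multiDisc_cons, List.map_cons, ih, disc, map_add, add_right_comm _ (ι a) c]

end Disc

section Fdeg

variable {A B : Type*} [AddCommGroup A] [AddCommGroup B] {f g : A → B} {d e : ℕ}

lemma FdegLE.mono (hf : FdegLE f d) (hde : d ≤ e) : FdegLE f e := by
  intro l hl
  rw [← List.take_append_drop (e - d) l, multiDisc_append,
    hf _ (by simp only [List.length_drop]; omega), multiDisc_zero]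

lemma fdegLE_zero_iff : FdegLE f 0 ↔ ∀ a, disc a f = 0 := by
  refine ⟨fun hf a => hf [a] rfl, fun hf l hl => ?_⟩
  obtain ⟨a, rfl⟩ := List.length_eq_one_iff.1 hl
  exact hf a

lemma fdegLE_succ_iff : FdegLE f (d + 1) ↔ ∀ a, FdegLE (disc a f) d := by
  constructor
  · intro hf a l hl
    simpa [multiDisc_append] using hf (l ++ [a]) (by simp [hl])
  · intro hf l hl
    have hne : l ≠ [] := List.ne_nil_of_length_pos (by omega)
    rw [← List.dropLast_append_getLast hne, multiDisc_append]
    exact hf _ _ (by simp [hl])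

lemma FdegLE.disc (hf : FdegLE f d) (a : A) : FdegLE (disc a f) d :=
  fdegLE_succ_iff.1 (hf.mono d.le_succ) a

lemma FdegLE.iterate_disc (hf : FdegLE f d) (a : A) (k : ℕ) :
    FdegLE ((_root_.disc a)^[k] f) d := by
  induction k with
  | zero => exact hf
  | succ k ih => rw [Function.iterate_succ_apply']; exact ih.disc a

lemma FdegLE.add (hf : FdegLE f d) (hg : FdegLE g d) : FdegLE (f + g) d := fun l hl => by
  rw [multiDisc_add, hf l hl, hg l hl, add_zero]

lemma FdegLE.comp_add {C : Type*} [AddCommGroup C] (hf : FdegLE f d) (ι : C →+ A) (c : A) :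
    FdegLE (fun x => f (ι x + c)) d := fun l hl => by
  rw [multiDisc_comp_add, hf _ (by simp [hl])]
  rfl

lemma FdegLE.comp {C : Type*} [AddCommGroup C] (hf : FdegLE f d) (ι : C →+ A) :
    FdegLE (fun x => f (ι x)) d := by
  simpa only [add_zero] using hf.comp_add ι 0

lemma fdegLE_addMonoidHom_comp_iff {B' : Type*} [AddCommGroup B'] {φ : B →+ B'}
    (hφ : Function.Injective φ) : FdegLE (φ ∘ f) d ↔ FdegLE f d := by
  refine forall₂_congr fun l _ => ?_
  simp only [multiDisc_addMonoidHom_comp, funext_iff, Function.comp_apply, Pi.zero_apply,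
    map_eq_zero_iff φ hφ]

lemma fdegLE_const (b : B) : FdegLE (fun _ : A => b) 0 :=
  fdegLE_zero_iff.2 fun _ => funext fun _ => sub_self b

lemma AddMonoidHom.fdegLE_one (φ : A →+ B) : FdegLE φ 1 :=
  fdegLE_succ_iff.2 fun a => by
    have : disc a φ = fun _ => φ a := funext fun _ => by simp [_root_.disc]
    exact this ▸ fdegLE_const (φ a)

end Fdeg

section Mul

variable {A B : Type*} [AddCommGroup A] [Ring B] {f g : A → B} {d e : ℕ}

lemma disc_mul (a : A) (f g : A → B) :
    disc a (f * g) = disc a f * (fun x => g (x + a)) + f * disc a g := by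
  funext x
  simp only [disc, Pi.mul_apply, Pi.add_apply]
  noncomm_ring

/-- Leibniz rule `Δ_a (f g) = Δ_a f · g(· + a) + f · Δ_a g`, by induction on `d + e`. -/
lemma FdegLE.mul (hf : FdegLE f d) (hg : FdegLE g e) : FdegLE (f * g) (d + e) := by
  obtain ⟨n, hn⟩ : ∃ n, d + e = n := ⟨_, rfl⟩
  rw [hn]
  induction n generalizing d e f g with
  | zero =>
    obtain ⟨rfl, rfl⟩ : d = 0 ∧ e = 0 := by omega
    refine fdegLE_zero_iff.2 fun a => ?_
    rw [disc_mul, fdegLE_zero_iff.1 hf a, fdegLE_zero_iff.1 hg a, zero_mul, mul_zero, add_zero]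
  | succ n ih =>
    refine fdegLE_succ_iff.2 fun a => ?_
    rw [disc_mul]
    refine FdegLE.add ?_ ?_
    · rcases d with _ | d
      · rw [fdegLE_zero_iff.1 hf a, zero_mul]
        exact (fdegLE_const 0).mono n.zero_le
      · exact ih (fdegLE_succ_iff.1 hf a) (hg.comp_add (AddMonoidHom.id A) a) (by omega)
    · rcases e with _ | e
      · rw [fdegLE_zero_iff.1 hg a, mul_zero]
        exact (fdegLE_const 0).mono n.zero_le
      · exact ih hf (fdegLE_succ_iff.1 hg a) (by omega)

end Mul

section Polynomial

open MvPolynomial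

lemma exists_fdegLE_eval {A R σ : Type*} [AddCommGroup A] [CommRing R] (φ : σ → A →+ R)
    (P : MvPolynomial σ R) : ∃ d, FdegLE (fun x => eval (fun i => φ i x) P) d := by
  induction P using MvPolynomial.induction_on with
  | C r => exact ⟨0, by simpa using fdegLE_const r⟩
  | add p q hp hq =>
    obtain ⟨d, hd⟩ := hp
    obtain ⟨e, he⟩ := hq
    refine ⟨max d e, ?_⟩
    simp only [map_add]
    exact (hd.mono (le_max_left d e)).add (he.mono (le_max_right d e))
  | mul_X p i hp =>
    obtain ⟨d, hd⟩ := hp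
    refine ⟨d + 1, ?_⟩
    simp only [map_mul, eval_X]
    exact hd.mul (φ i).fdegLE_one

end Polynomial

section Newton

open Finset

variable {A G : Type*} [AddCommGroup A] [AddCommGroup G]

lemma iterate_disc_comp_add {C : Type*} [AddCommGroup C] (ι : C →+ A) (c : A) (a : C) (k : ℕ)
    (f : A → G) : (disc a)^[k] (fun x => f (ι x + c)) = fun x => (disc (ι a))^[k] f (ι x + c) := by
  rw [← multiDisc_replicate, multiDisc_comp_add, List.map_replicate, multiDisc_replicate]

lemma eq_of_disc_one_eq {h₁ h₂ : ℤ → G} (h0 : h₁ 0 = h₂ 0) (hd : disc 1 h₁ = disc 1 h₂) :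
    h₁ = h₂ := by
  have step (t : ℤ) : h₁ (t + 1) - h₁ t = h₂ (t + 1) - h₂ t := congrFun hd t
  funext t
  induction t using Int.induction_on with
  | zero => exact h0
  | succ k ih => rw [← sub_add_cancel (h₁ _) (h₁ k), step, ih, sub_add_cancel]
  | pred k ih =>
    have := step (-k - 1)
    rw [sub_add_cancel] at this
    rw [← sub_sub_cancel (h₁ (-k)) (h₁ _), this, ih, sub_sub_cancel]

lemma disc_one_sum_choose_smul (d : ℕ) (c : ℕ → G) :
    disc 1 (fun t : ℤ => ∑ k ∈ range (d + 1), Ring.choose t k • c k)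
      = fun t => ∑ k ∈ range d, Ring.choose t k • c (k + 1) := by
  funext t
  simp only [disc, sum_range_succ' _ d, Ring.choose_succ_succ, Ring.choose_zero_right, add_smul,
    sum_add_distrib]
  abel

/-- Newton's forward-difference formula; unlike `shift_eq_sum_fwdDiff_iter` it also covers
negative arguments. -/
theorem eq_sum_choose_smul_of_iterate_disc_eq_zero {h : ℤ → G} {d : ℕ}
    (hd : (disc 1)^[d] h = 0) : h = fun t => ∑ k ∈ range d, Ring.choose t k • (disc 1)^[k] h 0 := by
  induction d generalizing h with
  | zero => exact hd
  | succ d ih =>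
    refine eq_of_disc_one_eq ?_ ?_
    · simp [Ring.choose_zero_ite]
    · rw [disc_one_sum_choose_smul]
      simp only [Function.iterate_succ_apply]
      exact ih (by rwa [← Function.iterate_succ_apply])

theorem FdegLE.eq_sum_choose_smul {f : A → G} {d : ℕ} (hf : FdegLE f d) (a c : A) (t : ℤ) :
    f (t • a + c) = ∑ k ∈ range (d + 1), Ring.choose t k • (_root_.disc a)^[k] f c := by
  have hiter (k : ℕ) : (_root_.disc 1)^[k] (fun s : ℤ => f (s • a + c))
      = fun s => (_root_.disc a)^[k] f (s • a + c) := by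
    simpa using iterate_disc_comp_add (zmultiplesHom A a) c 1 k f
  have hzero : (_root_.disc 1)^[d + 1] (fun s : ℤ => f (s • a + c)) = 0 := by
    rw [hiter, ← multiDisc_replicate, hf _ (List.length_replicate ..)]
    rfl
  simpa [hiter] using congrFun (eq_sum_choose_smul_of_iterate_disc_eq_zero hzero) t

end Newton

section Interpolation

open MvPolynomial Finset

variable {K : Type*} [Field K] [CharZero K]

lemma exists_polynomial_eval_intCast_eq_choose (k : ℕ) :
    ∃ p : Polynomial K, ∀ t : ℤ, p.eval (t : K) = ((Ring.choose t k : ℤ) : K) := by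
  refine ⟨Polynomial.C (k.factorial : K)⁻¹ * descPochhammer K k, fun t => ?_⟩
  rw [Polynomial.eval_mul, Polynomial.eval_C, ← descPochhammer_eval_cast,
    Polynomial.eval_eq_smeval, Ring.descPochhammer_eq_factorial_smul_choose, nsmul_eq_mul,
    Int.cast_mul, Int.cast_natCast]
  exact inv_mul_cancel_left₀ (Nat.cast_ne_zero.2 k.factorial_ne_zero) _

lemma Fin.eq_zsmul_single_zero_add_cons_zero {N : ℕ} (x : Fin (N + 1) → ℤ) :
    x = x 0 • Pi.single 0 1 + Fin.cons 0 (Fin.tail x) := by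
  funext i
  refine Fin.cases ?_ (fun i => ?_) i <;> simp [Fin.tail]

theorem FdegLE.exists_mvPolynomial {N : ℕ} {f : (Fin N → ℤ) → K} {d : ℕ} (hf : FdegLE f d) :
    ∃ P : MvPolynomial (Fin N) K, ∀ x, f x = eval (fun i => (x i : K)) P := by
  induction N with
  | zero => exact ⟨C (f 0), fun x => by simp [Subsingleton.elim x 0]⟩
  | succ N ih =>
    let consZero : (Fin N → ℤ) →+ (Fin (N + 1) → ℤ) :=
      AddMonoidHom.mk' (fun y => (Fin.cons 0 y : Fin (N + 1) → ℤ)) fun y z => by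
        funext i
        refine Fin.cases ?_ (fun i => ?_) i <;> simp
    choose Q hQ using fun k =>
      ih ((hf.iterate_disc (Pi.single 0 1) k).comp consZero)
    choose p hp using exists_polynomial_eval_intCast_eq_choose (K := K)
    refine ⟨∑ k ∈ range (d + 1), (p k).toMvPolynomial 0 * rename Fin.succ (Q k), fun x => ?_⟩
    conv_lhs => rw [Fin.eq_zsmul_single_zero_add_cons_zero x, hf.eq_sum_choose_smul]
    rw [map_sum]
    refine sum_congr rfl fun k _ => ?_
    rw [zsmul_eq_mul, map_mul, eval_toMvPolynomial, hp, eval_rename]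
    exact congrArg _ (hQ k (Fin.tail x))

end Interpolation

theorem finite_fdeg_iff_integer_valued_polynomial_general
    (N : ℕ) (f : (Fin N → ℤ) → ℤ) :
    (∃ d : ℕ, FdegLE f d) ↔
      ∃ P : MvPolynomial (Fin N) ℚ,
        ∀ x : Fin N → ℤ, (f x : ℚ) = MvPolynomial.eval (fun i => (x i : ℚ)) P := by
  have hcast : Function.Injective (Int.castAddHom ℚ) := Int.cast_injective
  constructor
  · rintro ⟨d, hd⟩
    exact ((fdegLE_addMonoidHom_comp_iff hcast).2 hd).exists_mvPolynomial
  · rintro ⟨P, hP⟩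
    obtain ⟨d, hd⟩ :=
      exists_fdegLE_eval (fun i => (Int.castAddHom ℚ).comp (Pi.evalAddMonoidHom _ i)) P
    have hf : Int.castAddHom ℚ ∘ f = fun x => MvPolynomial.eval (fun i => (x i : ℚ)) P :=
      funext hP
    exact ⟨d, (fdegLE_addMonoidHom_comp_iff hcast).1 (hf ▸ hd)⟩

/-- **Finite functional degree = integer-valued polynomial.** A function `f : ℤ^N → ℤ`
has finite functional degree iff there is a polynomial `P ∈ ℚ[t_1, …, t_N]` with
`f x = P x` for every `x ∈ ℤ^N` (so `P` is integer-valued on `ℤ^N`). -/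
theorem finite_fdeg_iff_integer_valued_polynomial
    (N : ℕ) (hN : 1 ≤ N) (f : (Fin N → ℤ) → ℤ) :
    (∃ d : ℕ, FdegLE f d) ↔
      ∃ P : MvPolynomial (Fin N) ℚ,
        ∀ x : Fin N → ℤ, (f x : ℚ) = MvPolynomial.eval (fun i => (x i : ℚ)) P :=
  finite_fdeg_iff_integer_valued_polynomial_general N f
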